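/- Define y₂ := x_{2,1} and, for each n ≥ 2, y_{n+1} := x_{2,0}·x_{n+1,1} − x_{n+1,0}·x_{2,1} in R_∞. Then D_∞(y_{n+1}) = 0 for every n ≥ 2, and the family consisting of all variables x_{n,0} (n ≥ 2), all elements y_n (n ≥ 2), and all elements x̄_{n,k} (n ≥ 2, 2 ≤ k ≤ n) is algebraically independent over ℚ. -/

import Mathlib

open MvPolynomial

noncomputable section

/-- The index set `{(n,k) : 2 ≤ n, 0 ≤ k ≤ n}` of the variables `x_{n,k}` of `R_∞`. -/
abbrev Idx : Type := {p : ℕ × ℕ // 2 ≤ p.1 ∧ p.2 ≤ p.1}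

/-- The polynomial ring `R_∞ = ℚ[x_{n,k} : n ≥ 2, 0 ≤ k ≤ n]`. -/
abbrev Rinf : Type := MvPolynomial Idx ℚ

/-- The variable `x_{n,k}` (and `0` for out-of-range indices, which never occur below). -/
def xv (n k : ℕ) : Rinf := if h : 2 ≤ n ∧ k ≤ n then X ⟨(n, k), h⟩ else 0

/-- The derivation `D_∞` with `D_∞(x_{n,k}) = x_{n,k−1}` for `1 ≤ k ≤ n` and
`D_∞(x_{n,0}) = 0`. -/
def Dinf : Derivation ℚ Rinf Rinf :=
  MvPolynomial.mkDerivation ℚ fun s : Idx =>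
    if s.1.2 = 0 then 0 else xv s.1.1 (s.1.2 - 1)

/-- The weight `wt(x_{n,k}) = k`. -/
def wt : Idx → ℕ := fun s => s.1.2

/-- `R_∞^{(d)}`: the `ℚ`-span of the monomials of weight `d`. -/
def W (d : ℕ) : Submodule ℚ Rinf := weightedHomogeneousSubmodule ℚ wt d

/-- `x̄_{n,2ℓ} := x_{n,ℓ}² + 2 Σ_{i=0}^{ℓ−1} (−1)^{ℓ+i} x_{n,i} x_{n,2ℓ−i}`. -/
def xbarE (n l : ℕ) : Rinf :=
  xv n l ^ 2 + 2 * ∑ i ∈ Finset.range l, (-1 : Rinf) ^ (l + i) * xv n i * xv n (2 * l - i)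

/-- `x̂_{n,2ℓ+1} := x_{n,ℓ}x_{n,ℓ+1} + Σ_{i=0}^{ℓ−1} (−1)^{ℓ+i}(2ℓ−2i+1) x_{n,i} x_{n,2ℓ+1−i}`. -/
def xhatO (n l : ℕ) : Rinf :=
  xv n l * xv n (l + 1) +
    ∑ i ∈ Finset.range l,
      (-1 : Rinf) ^ (l + i) * ((2 * l - 2 * i + 1 : ℕ) : Rinf) * xv n i * xv n (2 * l + 1 - i)

/-- `x̄_{n,2ℓ+1} := x_{n,1}·x̄_{n,2ℓ} − x_{n,0}·x̂_{n,2ℓ+1}`. -/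
def xbarO (n l : ℕ) : Rinf := xv n 1 * xbarE n l - xv n 0 * xhatO n l

/-- `x̄_{n,k}` for `k ≥ 2` (even or odd case). -/
def xbar (n k : ℕ) : Rinf := if k % 2 = 0 then xbarE n (k / 2) else xbarO n (k / 2)

/-- `y₂ := x_{2,1}` and `y_{n+1} := x_{2,0}·x_{n+1,1} − x_{n+1,0}·x_{2,1}` for `n ≥ 2`. -/
def yv (n : ℕ) : Rinf :=
  if n = 2 then xv 2 1 else xv 2 0 * xv n 1 - xv n 0 * xv 2 1

/-- The family consisting of all `x_{n,0}` (`n ≥ 2`), all `y_n` (`n ≥ 2`) and all `x̄_{n,k}`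
(`n ≥ 2`, `2 ≤ k ≤ n`). -/
def fam :
    ({n : ℕ // 2 ≤ n} ⊕ {n : ℕ // 2 ≤ n} ⊕ {p : ℕ × ℕ // 2 ≤ p.1 ∧ 2 ≤ p.2 ∧ p.2 ≤ p.1}) →
      Rinf :=
  Sum.elim (fun n => xv n.1 0) (Sum.elim (fun n => yv n.1) (fun p => xbar p.1.1 p.1.2))

/-!
Over the fraction field `K` of `R_∞` the relations are triangular, row by row: for `ℓ ≥ 1`,
`x̄_{n,2ℓ} = 2 (-1)^ℓ x_{n,0} x_{n,2ℓ} + (terms in x_{n,i}, i < 2ℓ)` and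
`x̄_{n,2ℓ+1} = -(-1)^ℓ (2ℓ+1) x_{n,0}² x_{n,2ℓ+1} + (terms in x_{n,i}, i < 2ℓ+1)`,
and for `n ≠ 2`, `y_n = x_{2,0} x_{n,1} - x_{n,0} x_{2,1}`. As the `x_{n,0}` are invertible in `K`,
these equations can be solved recursively for the `x_{n,k}`, which gives a `ℚ`-algebra map
`R_∞ → K` sending the family injectively to the variables of `K`. A family whose image under an
algebra map is algebraically independent is itself algebraically independent.
-/

open Finset

section Forms

variable {A B : Type*} [CommRing A] [CommRing B]

-- `x̄_{2ℓ}`, `x̂_{2ℓ+1}`, `x̄_{2ℓ+1}` of a sequence `v`, so that `xbarE n = barEven (xv n)`,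
-- `xhatO n = hatOdd (xv n)` and `xbarO n = barOdd (xv n)` hold by `rfl`
def barEven (v : ℕ → A) (l : ℕ) : A :=
  v l ^ 2 + 2 * ∑ i ∈ range l, (-1 : A) ^ (l + i) * v i * v (2 * l - i)

def hatOdd (v : ℕ → A) (l : ℕ) : A :=
  v l * v (l + 1) +
    ∑ i ∈ range l, (-1 : A) ^ (l + i) * ((2 * l - 2 * i + 1 : ℕ) : A) * v i * v (2 * l + 1 - i)

def barOdd (v : ℕ → A) (l : ℕ) : A := v 1 * barEven v l - v 0 * hatOdd v l

def cutoff (k : ℕ) (v : ℕ → A) (m : ℕ) : A := if m < k then v m else 0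

lemma barEven_congr {v w : ℕ → A} {l : ℕ} (h : ∀ m ≤ 2 * l, v m = w m) :
    barEven v l = barEven w l := by
  unfold barEven
  rw [h l (by omega)]
  congr 2
  refine sum_congr rfl fun i hi => ?_
  rw [mem_range] at hi
  rw [h i (by omega), h (2 * l - i) (by omega)]

lemma hatOdd_congr {v w : ℕ → A} {l : ℕ} (h : ∀ m ≤ 2 * l + 1, v m = w m) :
    hatOdd v l = hatOdd w l := by
  unfold hatOdd
  rw [h l (by omega), h (l + 1) (by omega)]
  congr 1
  refine sum_congr rfl fun i hi => ?_
  rw [mem_range] at hi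
  rw [h i (by omega), h (2 * l + 1 - i) (by omega)]

lemma barOdd_congr {v w : ℕ → A} {l : ℕ} (h : ∀ m ≤ 2 * l + 1, v m = w m) :
    barOdd v l = barOdd w l := by
  rw [barOdd, barOdd, h 0 (by omega), h 1 (by omega),
    barEven_congr fun m hm => h m (by omega), hatOdd_congr h]

lemma map_barEven (f : A →+* B) (v : ℕ → A) (l : ℕ) : f (barEven v l) = barEven (f ∘ v) l := by
  simp [barEven, map_ofNat]

lemma map_barOdd (f : A →+* B) (v : ℕ → A) (l : ℕ) : f (barOdd v l) = barOdd (f ∘ v) l := by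
  simp [barOdd, hatOdd, map_barEven]

lemma cutoff_of_lt {k m : ℕ} (v : ℕ → A) (h : m < k) : cutoff k v m = v m := if_pos h

lemma cutoff_self (k : ℕ) (v : ℕ → A) : cutoff k v k = 0 := if_neg (lt_irrefl k)

lemma barEven_eq_cutoff_add (v : ℕ → A) {l : ℕ} (hl : 1 ≤ l) :
    barEven v l = barEven (cutoff (2 * l) v) l + 2 * (-1) ^ l * v 0 * v (2 * l) := by
  obtain ⟨m, rfl⟩ := Nat.exists_eq_add_of_le' hl
  simp +contextual (disch := (try simp only [mem_range] at *); omega) only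
    [barEven, sum_range_succ', Nat.sub_zero, cutoff_of_lt, cutoff_self]
  ring

lemma hatOdd_eq_cutoff_add (v : ℕ → A) {l : ℕ} (hl : 1 ≤ l) :
    hatOdd v l = hatOdd (cutoff (2 * l + 1) v) l +
      (-1) ^ l * ((2 * l + 1 : ℕ) : A) * v 0 * v (2 * l + 1) := by
  obtain ⟨m, rfl⟩ := Nat.exists_eq_add_of_le' hl
  simp +contextual (disch := (try simp only [mem_range] at *); omega) only
    [hatOdd, sum_range_succ', Nat.sub_zero, Nat.mul_zero, cutoff_of_lt, cutoff_self]
  ring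

lemma barOdd_eq_cutoff_sub (v : ℕ → A) {l : ℕ} (hl : 1 ≤ l) :
    barOdd v l = barOdd (cutoff (2 * l + 1) v) l -
      (-1) ^ l * ((2 * l + 1 : ℕ) : A) * v 0 ^ 2 * v (2 * l + 1) := by
  have hcut : ∀ m ≤ 2 * l, v m = cutoff (2 * l + 1) v m := fun m hm =>
    (cutoff_of_lt v (by omega)).symm
  rw [barOdd, barOdd, hatOdd_eq_cutoff_add v hl, barEven_congr hcut, hcut 0 (by omega),
    hcut 1 (by omega)]
  ring

end Forms

section Inverse

variable {F : Type*} [Field F]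

def barPreimage (a : ℕ → F) : ℕ → F
  | 0 => a 0
  | 1 => a 1
  | k + 2 =>
    let v : ℕ → F := fun m => if _ : m < k + 2 then barPreimage a m else 0
    if k % 2 = 0 then (a (k + 2) - barEven v ((k + 2) / 2)) / (2 * (-1) ^ ((k + 2) / 2) * a 0)
    else (barOdd v ((k + 2) / 2) - a (k + 2)) /
      ((-1) ^ ((k + 2) / 2) * ((2 * ((k + 2) / 2) + 1 : ℕ) : F) * a 0 ^ 2)

lemma barPreimage_zero (a : ℕ → F) : barPreimage a 0 = a 0 := by rw [barPreimage]

lemma barPreimage_one (a : ℕ → F) : barPreimage a 1 = a 1 := by rw [barPreimage]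

lemma barPreimage_even (a : ℕ → F) {l : ℕ} (hl : 1 ≤ l) :
    barPreimage a (2 * l) = (a (2 * l) - barEven (cutoff (2 * l) (barPreimage a)) l) /
      (2 * (-1) ^ l * a 0) := by
  obtain ⟨k, hk⟩ : ∃ k, 2 * l = k + 2 := ⟨2 * l - 2, by omega⟩
  conv_lhs => rw [hk, barPreimage]
  rw [if_pos (by omega), show (k + 2) / 2 = l by omega, ← hk]
  rfl

lemma barPreimage_odd (a : ℕ → F) {l : ℕ} (hl : 1 ≤ l) :
    barPreimage a (2 * l + 1) = (barOdd (cutoff (2 * l + 1) (barPreimage a)) l - a (2 * l + 1)) /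
      ((-1) ^ l * ((2 * l + 1 : ℕ) : F) * a 0 ^ 2) := by
  obtain ⟨k, hk⟩ : ∃ k, 2 * l + 1 = k + 2 := ⟨2 * l - 1, by omega⟩
  conv_lhs => rw [hk, barPreimage]
  rw [if_neg (by omega), show (k + 2) / 2 = l by omega, ← hk]
  rfl

variable [CharZero F] {a : ℕ → F}

lemma barEven_barPreimage (ha : a 0 ≠ 0) {l : ℕ} (hl : 1 ≤ l) :
    barEven (barPreimage a) l = a (2 * l) := by
  rw [barEven_eq_cutoff_add _ hl, barPreimage_even a hl, barPreimage_zero]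
  field_simp
  ring

lemma barOdd_barPreimage (ha : a 0 ≠ 0) {l : ℕ} (hl : 1 ≤ l) :
    barOdd (barPreimage a) l = a (2 * l + 1) := by
  have h : ((2 * l + 1 : ℕ) : F) ≠ 0 := Nat.cast_ne_zero.2 (by omega)
  rw [barOdd_eq_cutoff_sub _ hl, barPreimage_odd a hl, barPreimage_zero]
  field_simp
  ring

end Inverse

lemma xv_eq_X {n k : ℕ} (h : 2 ≤ n ∧ k ≤ n) : xv n k = X ⟨(n, k), h⟩ := dif_pos h

lemma aeval_xv {A : Type*} [CommRing A] [Algebra ℚ A] (g : Idx → A) {n k : ℕ}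
    (h : 2 ≤ n ∧ k ≤ n) : aeval g (xv n k) = g ⟨(n, k), h⟩ := by
  rw [xv_eq_X h, aeval_X]

lemma Dinf_xv_zero {n : ℕ} (hn : 2 ≤ n) : Dinf (xv n 0) = 0 := by
  rw [xv_eq_X ⟨hn, by omega⟩, Dinf, mkDerivation_X, if_pos rfl]

lemma Dinf_xv_one {n : ℕ} (hn : 2 ≤ n) : Dinf (xv n 1) = xv n 0 := by
  rw [xv_eq_X ⟨hn, by omega⟩, Dinf, mkDerivation_X, if_neg one_ne_zero]
  rfl

lemma Dinf_yv_succ {n : ℕ} (hn : 2 ≤ n) : Dinf (yv (n + 1)) = 0 := by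
  rw [yv, if_neg (by omega), map_sub, Derivation.leibniz, Derivation.leibniz, Dinf_xv_zero le_rfl,
    Dinf_xv_one le_rfl, Dinf_xv_zero (by omega : 2 ≤ n + 1), Dinf_xv_one (by omega : 2 ≤ n + 1),
    smul_eq_mul, smul_eq_mul, smul_eq_mul, smul_eq_mul]
  ring

local notation "K" => FractionRing Rinf

def xK (n k : ℕ) : K := algebraMap Rinf K (xv n k)

lemma xK_ne_zero {n k : ℕ} (h : 2 ≤ n ∧ k ≤ n) : xK n k ≠ 0 := by
  rw [xK, xv_eq_X h]
  exact (IsFractionRing.to_map_ne_zero_of_mem_nonZeroDivisors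
    (mem_nonZeroDivisors_of_ne_zero (X_ne_zero _)))

-- the value of `x_{n,1}` for which `y_n ↦ x_{n,1}`
def rowTarget (n k : ℕ) : K :=
  if k = 1 ∧ n ≠ 2 then (xK n 1 + xK n 0 * xK 2 1) / xK 2 0 else xK n k

def barSubst (s : Idx) : K := barPreimage (rowTarget s.1.1) s.1.2

lemma aeval_barSubst_xv {n k : ℕ} (h : 2 ≤ n ∧ k ≤ n) :
    aeval barSubst (xv n k) = barPreimage (rowTarget n) k :=
  aeval_xv barSubst h

lemma aeval_barSubst_xv_zero {n : ℕ} (hn : 2 ≤ n) : aeval barSubst (xv n 0) = xK n 0 := by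
  rw [aeval_barSubst_xv ⟨hn, by omega⟩, barPreimage_zero, rowTarget, if_neg (by omega)]

lemma aeval_barSubst_yv {n : ℕ} (hn : 2 ≤ n) : aeval barSubst (yv n) = xK n 1 := by
  have hx21 : aeval barSubst (xv 2 1) = xK 2 1 := by
    rw [aeval_barSubst_xv (by norm_num), barPreimage_one, rowTarget, if_neg (by omega)]
  rcases eq_or_ne n 2 with rfl | hn2
  · rw [yv, if_pos rfl, hx21]
  · have hx0 : xK 2 0 ≠ 0 := xK_ne_zero (by norm_num)
    rw [yv, if_neg hn2, map_sub, map_mul, map_mul, hx21, aeval_barSubst_xv_zero le_rfl,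
      aeval_barSubst_xv_zero hn, aeval_barSubst_xv ⟨hn, by omega⟩, barPreimage_one, rowTarget,
      if_pos ⟨rfl, hn2⟩]
    field_simp
    ring

lemma aeval_barSubst_xbar {n k : ℕ} (hn : 2 ≤ n) (hk : 2 ≤ k) (hkn : k ≤ n) :
    aeval barSubst (xbar n k) = xK n k := by
  have hrow : ∀ m ≤ n, (aeval barSubst ∘ xv n) m = barPreimage (rowTarget n) m :=
    fun m hm => aeval_barSubst_xv ⟨hn, hm⟩
  have ha : rowTarget n 0 ≠ 0 := by
    rw [rowTarget, if_neg (by omega)]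
    exact xK_ne_zero ⟨hn, by omega⟩
  have htarget : rowTarget n k = xK n k := by rw [rowTarget, if_neg (by omega)]
  obtain ⟨l, rfl | rfl⟩ := Nat.even_or_odd' k
  · rw [xbar, if_pos (by omega), show 2 * l / 2 = l by omega, ← htarget,
      ← barEven_barPreimage ha (by omega : 1 ≤ l), ← barEven_congr fun m hm => hrow m (by omega)]
    exact map_barEven (aeval barSubst).toRingHom (xv n) l
  · rw [xbar, if_neg (by omega), show (2 * l + 1) / 2 = l by omega, ← htarget,
      ← barOdd_barPreimage ha (by omega : 1 ≤ l), ← barOdd_congr fun m hm => hrow m (by omega)]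
    exact map_barOdd (aeval barSubst).toRingHom (xv n) l

abbrev FamIdx : Type :=
  {n : ℕ // 2 ≤ n} ⊕ {n : ℕ // 2 ≤ n} ⊕ {p : ℕ × ℕ // 2 ≤ p.1 ∧ 2 ≤ p.2 ∧ p.2 ≤ p.1}

def famIndex : FamIdx → Idx :=
  Sum.elim (fun n => ⟨(n, 0), n.2, by omega⟩)
    (Sum.elim (fun n => ⟨(n, 1), n.2, by omega⟩) (fun p => ⟨p, p.2.1, p.2.2.2⟩))

lemma famIndex_injective : Function.Injective famIndex := by
  refine Function.Injective.sumElim ?_ (Function.Injective.sumElim ?_ ?_ ?_) ?_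
  all_goals simp [Function.Injective, Subtype.ext_iff]
  all_goals omega

lemma aeval_barSubst_fam (i : FamIdx) :
    aeval barSubst (fam i) = algebraMap Rinf K (X (famIndex i)) := by
  rcases i with ⟨n, hn⟩ | ⟨n, hn⟩ | ⟨⟨n, k⟩, hn, hk, hkn⟩
  · rw [← xv_eq_X]; exact aeval_barSubst_xv_zero hn
  · rw [← xv_eq_X]; exact aeval_barSubst_yv hn
  · rw [← xv_eq_X]; exact aeval_barSubst_xbar hn hk hkn

theorem algebraicIndependent_fam : AlgebraicIndependent ℚ fam := by
  refine AlgebraicIndependent.of_comp (aeval barSubst) ?_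
  rw [show aeval barSubst ∘ fam = (IsScalarTower.toAlgHom ℚ Rinf K ∘ X) ∘ famIndex from
    funext aeval_barSubst_fam]
  exact ((algebraicIndependent_X Idx ℚ).map' (IsFractionRing.injective Rinf K)).comp _
    famIndex_injective

/-- `D_∞(y_{n+1}) = 0` for every `n ≥ 2`, and the family consisting of all `x_{n,0}`,
all `y_n` and all `x̄_{n,k}` is algebraically independent over `ℚ`. -/
theorem statement6 :
    (∀ n : ℕ, 2 ≤ n → Dinf (yv (n + 1)) = 0) ∧ AlgebraicIndependent ℚ fam :=
  ⟨fun _ => Dinf_yv_succ, algebraicIndependent_fam⟩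

end
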